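/- arXiv:1308.2649 — 8 statements merged into one kernel-verified Lean document; each statement's English description precedes it below -/
import Mathlib

section
/- Let σ > 0 and for each k ∈ ℤ define d_{L,k}(σ) = ((−1)^k sinh(σπ)/(σπ²)) · ∫₀^π cos(kt)/cosh(σt) dt. Then for every integer m, ∑_{k∈ℤ} d_{L,k}(σ) · σ²/(σ² + (m − k)²) = δ_{0m}, where δ_{0m} is the Kronecker delta (equal to 1 if m = 0 and 0 otherwise). In other words, the function φ̃_L(t) = ∑_{k∈ℤ} d_{L,k}(σ) · σ²/(σ² + (t − k)²) is the basic nod (interpolating) function for the system of integer shifts of the Cauchy–Lorentz function: φ̃_L(m) = δ_{0m} for all m ∈ ℤ. -/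
/-!
On `[-π, π]` the Fourier series of `cosh (σ t)` is
`(sinh (σπ) / σπ) ∑ₙ (-1)ⁿ φ_L(n) e^{int}`. Evaluating it at `-t`, reindexing `n = m - k` and
taking real parts gives, for `0 < t ≤ π`,
`∑ₖ (-1)ᵏ cos (k t) φ_L(m - k) = (-1)ᵐ cos (m t) · σπ cosh (σ t) / sinh (σπ)`.
Inserting the integral defining `d_{L,k}` and exchanging sum and integral (dominated convergence:
`1 / cosh ≤ 1` and `φ_L(m - ·)` is summable), the factor `cosh (σ t)` cancels and
`∑ₖ d_{L,k} φ_L(m - k) = ((-1)ᵐ / π) ∫₀^π cos (m t) dt = δ₀ₘ`.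
-/

open Real

/-- The coefficients of the basic nod function for the Lorentz system. -/
noncomputable def dL (σ : ℝ) (k : ℤ) : ℝ :=
  ((-1 : ℝ) ^ k * Real.sinh (σ * π) / (σ * π ^ 2)) *
    ∫ t in (0 : ℝ)..π, Real.cos (k * t) / Real.cosh (σ * t)

open Complex (I)

noncomputable def lorentz (σ x : ℝ) : ℝ := σ ^ 2 / (σ ^ 2 + x ^ 2)

lemma summable_lorentz_intCast (σ : ℝ) : Summable fun k : ℤ => lorentz σ k := by
  refine ((summable_one_div_int_pow.2 one_lt_two).mul_left (σ ^ 2)).of_norm_bounded_eventually ?_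
  filter_upwards [Filter.eventually_cofinite_ne 0] with k hk
  have hk2 : (0 : ℝ) < (k : ℝ) ^ 2 := by positivity
  rw [Real.norm_of_nonneg (by unfold lorentz; positivity), lorentz, mul_one_div]
  gcongr
  exact le_add_of_nonneg_left (sq_nonneg σ)

lemma summable_lorentz_sub (σ : ℝ) (m : ℤ) : Summable fun k : ℤ => lorentz σ (m - k) :=
  ((Equiv.subLeft m).summable_iff.2 (summable_lorentz_intCast σ)).congr fun k => by simp

lemma summable_neg_one_zpow_mul_lorentz (σ : ℝ) :
    Summable fun k : ℤ => (-1 : ℝ) ^ k * lorentz σ k :=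
  (summable_lorentz_intCast σ).of_norm_bounded fun k => by
    rw [norm_mul, norm_zpow, norm_neg, norm_one, one_zpow, one_mul,
      Real.norm_of_nonneg (by unfold lorentz; positivity)]

lemma integral_exp_mul_neg_pi_pi {w : ℂ} (hw : w ≠ 0) :
    ∫ x in -π..π, Complex.exp (w * x) = 2 * Complex.sinh (w * π) / w := by
  rw [integral_exp_mul_complex hw, Complex.two_sinh, Complex.ofReal_neg, mul_neg]

lemma sinh_sub_int_mul_I_mul_pi (c : ℂ) (n : ℤ) :
    Complex.sinh ((c - n * I) * π) = (((-1 : ℝ) ^ n : ℝ) : ℂ) * Complex.sinh (c * π) := by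
  rw [sub_mul, mul_right_comm, Complex.sinh_sub, Complex.sinh_mul_I, Complex.cosh_mul_I,
    Complex.sin_int_mul_pi, ← Real.cos_int_mul_pi]
  push_cast
  ring

lemma fourierCoeffOn_cosh {σ : ℝ} (hσ : σ ≠ 0) (n : ℤ) :
    fourierCoeffOn (lt_add_of_pos_right (-π) two_pi_pos)
      (fun x : ℝ => (Real.cosh (σ * x) : ℂ)) n =
      (Real.sinh (σ * π) / (σ * π) * ((-1) ^ n * lorentz σ n) : ℝ) := by
  have hne : ∀ s : ℝ, s ≠ 0 → (s : ℂ) - n * I ≠ 0 := fun s hs h => by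
    simpa [hs] using congrArg Complex.re h
  have hintegrand : ∀ x : ℝ,
      fourier (-n) (x : AddCircle (-π + 2 * π - -π)) • (Real.cosh (σ * x) : ℂ) =
      (Complex.exp ((σ - n * I) * x) + Complex.exp ((((-σ : ℝ) : ℂ) - n * I) * x)) / 2 := by
    intro x
    rw [fourier_coe_apply, smul_eq_mul, Complex.ofReal_cosh, Complex.cosh, ← mul_div_assoc,
      mul_add, ← Complex.exp_add, ← Complex.exp_add]
    congr 3 <;> field_simp <;> push_cast <;> ring
  rw [fourierCoeffOn_eq_integral]
  simp_rw [hintegrand]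
  rw [show -π + 2 * π = π by ring, intervalIntegral.integral_div, intervalIntegral.integral_add
      (Continuous.intervalIntegrable (by fun_prop) _ _)
      (Continuous.intervalIntegrable (by fun_prop) _ _),
    integral_exp_mul_neg_pi_pi (hne σ hσ),
    integral_exp_mul_neg_pi_pi (hne (-σ) (neg_ne_zero.2 hσ)),
    sinh_sub_int_mul_I_mul_pi, sinh_sub_int_mul_I_mul_pi]
  have h₁ := hne σ hσ
  have h₂ := hne (-σ) (neg_ne_zero.2 hσ)
  have h₃ : (σ : ℂ) ^ 2 + (n : ℂ) ^ 2 ≠ 0 := by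
    exact_mod_cast (by positivity : σ ^ 2 + (n : ℝ) ^ 2 ≠ 0)
  unfold lorentz
  push_cast at h₂ ⊢
  rw [Complex.real_smul, neg_mul, Complex.sinh_neg]
  push_cast
  have hπ : (π : ℂ) ≠ 0 := by exact_mod_cast pi_ne_zero
  field_simp
  linear_combination (-2 * σ * Complex.sinh (π * σ) * n ^ 2) * Complex.I_sq

lemma hasSum_fourier_cosh {σ : ℝ} (hσ : σ ≠ 0) {t : ℝ} (ht : t ∈ Set.Ico (-π) π) :
    HasSum (fun n : ℤ => (Real.sinh (σ * π) / (σ * π) * ((-1) ^ n * lorentz σ n) : ℝ) *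
      Complex.exp ((n * t : ℝ) * I)) (Real.cosh (σ * t)) := by
  have : Fact (0 < 2 * π) := ⟨two_pi_pos⟩
  let g : ℝ → ℂ := fun x => Real.cosh (σ * x)
  have hperiodic : g (-π) = g (-π + 2 * π) := by
    simp only [g, show -π + 2 * π = π by ring, mul_neg, Real.cosh_neg]
  let f : C(AddCircle (2 * π), ℂ) :=
    ⟨AddCircle.liftIco (2 * π) (-π) g, AddCircle.liftIco_continuous hperiodic (by fun_prop)⟩
  have hcoeff : fourierCoeff f = fun n : ℤ =>
      ((Real.sinh (σ * π) / (σ * π) * ((-1) ^ n * lorentz σ n) : ℝ) : ℂ) := by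
    ext n
    exact (fourierCoeff_liftIco_eq g n).trans (fourierCoeffOn_cosh hσ n)
  have hsummable : Summable (fourierCoeff f) := by
    rw [hcoeff]
    exact Complex.summable_ofReal.2 ((summable_neg_one_zpow_mul_lorentz σ).mul_left _)
  convert has_pointwise_sum_fourier_series_of_summable hsummable (t : AddCircle (2 * π)) using 1
  · ext n
    rw [hcoeff, fourier_coe_apply, smul_eq_mul]
    congr 2
    field_simp
    push_cast
    ring
  · exact (AddCircle.liftIco_coe_apply (f := g) (by rwa [show -π + 2 * π = π by ring])).symm

lemma neg_one_zpow_mul_neg_one_zpow_sub {R : Type*} [DivisionRing R] (m k : ℤ) :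
    (-1 : R) ^ m * (-1) ^ (m - k) = (-1) ^ k := by
  have h : (-1 : R) ≠ 0 := neg_ne_zero.2 one_ne_zero
  rw [← zpow_add₀ h, show m + (m - k) = k + 2 * (m - k) by ring, zpow_add₀ h,
    Even.neg_one_zpow ⟨m - k, two_mul _⟩, mul_one]

lemma hasSum_neg_one_zpow_mul_cos_mul_lorentz {σ : ℝ} (hσ : σ ≠ 0) (m : ℤ) {t : ℝ}
    (ht : t ∈ Set.Ioc (-π) π) :
    HasSum (fun k : ℤ => (-1) ^ k * Real.cos (k * t) * lorentz σ (m - k))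
      ((-1) ^ m * Real.cos (m * t) * (σ * π / Real.sinh (σ * π) * Real.cosh (σ * t))) := by
  have hsinh : Real.sinh (σ * π) ≠ 0 := Real.sinh_ne_zero.2 (mul_ne_zero hσ pi_ne_zero)
  have hcancel : Real.sinh (σ * π) / (σ * π) * (σ * π / Real.sinh (σ * π)) = 1 := by
    field_simp
  have hfourier := (hasSum_fourier_cosh hσ (t := -t)
    ⟨by linarith [ht.2], by linarith [ht.1]⟩).mul_left
      (((-1) ^ m * (σ * π / Real.sinh (σ * π)) : ℝ) * Complex.exp ((m * t : ℝ) * I))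
  convert Complex.hasSum_re ((Equiv.subLeft m).hasSum_iff.2 hfourier) using 1
  · ext k
    have hsign := neg_one_zpow_mul_neg_one_zpow_sub (R := ℝ) m k
    rw [Function.comp_apply, Equiv.subLeft_apply, mul_mul_mul_comm, ← Complex.exp_add,
      ← Complex.ofReal_mul, ← add_mul, ← Complex.ofReal_add,
      show (m : ℝ) * t + ((m - k : ℤ) : ℝ) * -t = k * t by push_cast; ring,
      Complex.re_ofReal_mul, Complex.exp_ofReal_mul_I_re]
    push_cast
    linear_combination -(lorentz σ (m - k) * Real.cos (k * t)) *
      ((-1) ^ m * (-1) ^ (m - k) * hcancel + hsign)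
  · simp only [mul_neg, Real.cosh_neg, Complex.mul_re, Complex.ofReal_re, Complex.ofReal_im,
      Complex.exp_ofReal_mul_I_re, Complex.exp_ofReal_mul_I_im]
    ring

lemma integral_cos_int_mul (m : ℤ) :
    ∫ t in (0 : ℝ)..π, Real.cos (m * t) = if m = 0 then π else 0 := by
  split_ifs with hm
  · simp [hm]
  · rw [intervalIntegral.integral_comp_mul_left (fun x => Real.cos x) (Int.cast_ne_zero.2 hm)]
    simp [integral_cos, Real.sin_int_mul_pi]

lemma dL_mul_eq_integral (σ : ℝ) (k : ℤ) (a : ℝ) :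
    dL σ k * a = ∫ t in (0 : ℝ)..π, Real.sinh (σ * π) / (σ * π ^ 2) / Real.cosh (σ * t) *
      ((-1) ^ k * Real.cos (k * t) * a) := by
  rw [dL, ← intervalIntegral.integral_const_mul, ← intervalIntegral.integral_mul_const]
  congr 1
  ext t
  ring

lemma hasSum_dL_mul_lorentz {σ : ℝ} (hσ : 0 < σ) (m : ℤ) :
    HasSum (fun k : ℤ => dL σ k * lorentz σ (m - k))
      (∫ t in (0 : ℝ)..π, (-1) ^ m * Real.cos (m * t) / π) := by
  set c := Real.sinh (σ * π) / (σ * π ^ 2) with hc_def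
  have hc : 0 ≤ c := by have := Real.sinh_pos_iff.2 (mul_pos hσ pi_pos); positivity
  simp_rw [dL_mul_eq_integral, ← hc_def]
  refine intervalIntegral.hasSum_integral_of_dominated_convergence
    (fun k _ => c * lorentz σ (m - k)) (fun k => by fun_prop) (fun k => ?_)
    (.of_forall fun t _ => (summable_lorentz_sub σ m).mul_left c) intervalIntegrable_const
    (.of_forall fun t ht => ?_)
  · refine .of_forall fun t _ => ?_
    have hL : 0 ≤ lorentz σ (m - k) := by unfold lorentz; positivity
    rw [Real.norm_eq_abs, abs_mul, abs_mul, abs_mul, abs_neg_one_zpow, one_mul,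
      abs_of_nonneg (by positivity : 0 ≤ c / Real.cosh (σ * t)), abs_of_nonneg hL]
    exact mul_le_mul (div_le_self hc (Real.one_le_cosh _))
      (mul_le_of_le_one_left hL (Real.abs_cos_le_one _)) (by positivity) hc
  · rw [Set.uIoc_of_le pi_pos.le] at ht
    have hsinh := (Real.sinh_pos_iff.2 (mul_pos hσ pi_pos)).ne'
    have hcosh := (Real.cosh_pos (σ * t)).ne'
    have hsum := (hasSum_neg_one_zpow_mul_cos_mul_lorentz hσ.ne' m
      ⟨by linarith [pi_pos, ht.1], ht.2⟩).mul_left (c / Real.cosh (σ * t))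
    rwa [show c / Real.cosh (σ * t) * ((-1) ^ m * Real.cos (m * t) *
        (σ * π / Real.sinh (σ * π) * Real.cosh (σ * t))) = (-1) ^ m * Real.cos (m * t) / π by
      rw [hc_def]; field_simp] at hsum

/-- With `d_{L,k}(σ) = ((−1)^k sinh(σπ)/(σπ²)) ∫₀^π cos(kt)/cosh(σt) dt`,
the function `φ̃_L(t) = ∑_{k∈ℤ} d_{L,k}(σ)·σ²/(σ²+(t−k)²)` satisfies
`φ̃_L(m) = δ_{0m}` for all integers `m`. -/
theorem lorentz_nod_function (σ : ℝ) (hσ : 0 < σ) (m : ℤ) :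
    (∑' k : ℤ, dL σ k * (σ ^ 2 / (σ ^ 2 + ((m : ℝ) - (k : ℝ)) ^ 2))) =
      if m = 0 then 1 else 0 := by
  calc _ = ∫ t in (0 : ℝ)..π, (-1) ^ m * Real.cos (m * t) / π :=
        (hasSum_dL_mul_lorentz hσ m).tsum_eq
    _ = _ := by
      rw [intervalIntegral.integral_div, intervalIntegral.integral_const_mul, integral_cos_int_mul]
      split_ifs with hm
      · simp [hm]
      · simp
end

section
/- Let σ > 0 and for each k ∈ ℤ define d_{L,k}(σ) = ((−1)^k sinh(σπ)/(σπ²)) · ∫₀^π cos(kt)/cosh(σt) dt. Then for every t ∈ [0, 2π], ∑_{k∈ℤ} d_{L,k}(σ) e^{−ikt} = sinh(σπ)/(σπ·cosh(σ(t − π))); that is, the d_{L,k}(σ) are exactly the Fourier coefficients of the reciprocal of the mask Φ_L(t, σ) = σπ·cosh(σ(t − π))/sinh(σπ). -/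
open Real

/-!
The reciprocal mask `t ↦ sinh(σπ) / (σπ cosh(σ(t - π)))` is smooth and takes the same value at
`0` and `2π`. Integrating by parts twice (the first boundary term vanishes by this periodicity)
shows that its Fourier coefficients on `[0, 2π]` are `O(1/n²)`, so its Fourier series converges
absolutely, and to the function itself since the periodic extension is continuous. Recentred at
`π` the function is even, so only the cosine part of each coefficient survives and the shift
contributes the sign `(-1)ⁿ`: the coefficients are exactly `d_{L,n}(σ)`, which is even in `n`.
-/

open Set MeasureTheory Complex

theorem norm_fourierCoeffOn_le {E : Type*} [NormedAddCommGroup E] [NormedSpace ℂ E]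
    {a b : ℝ} (hab : a < b) {f : ℝ → E} {M : ℝ} (hM : ∀ x ∈ Ioc a b, ‖f x‖ ≤ M) (n : ℤ) :
    ‖fourierCoeffOn hab f n‖ ≤ M := by
  have hba : 0 < b - a := sub_pos.2 hab
  rw [fourierCoeffOn_eq_integral, norm_smul, Real.norm_of_nonneg (by positivity), one_div,
    inv_mul_le_iff₀ hba]
  calc _ ≤ M * |b - a| := intervalIntegral.norm_integral_le_of_norm_le_const fun x hx => ?_
    _ = (b - a) * M := by rw [abs_of_pos hba, mul_comm]
  rw [uIoc_of_le hab.le] at hx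
  rw [norm_smul, fourier_apply, Circle.norm_coe, one_mul]
  exact hM x hx

theorem norm_fourierCoeffOn_le_of_hasDerivAt {a b : ℝ} (hab : a < b) {f f' : ℝ → ℂ} {n : ℤ}
    (hn : n ≠ 0) (hf : ∀ x ∈ uIcc a b, HasDerivAt f (f' x) x)
    (hf' : IntervalIntegrable f' volume a b) :
    ‖fourierCoeffOn hab f n‖ ≤
      (‖f b - f a‖ + (b - a) * ‖fourierCoeffOn hab f' n‖) / (2 * π * |(n : ℝ)|) := by
  rw [fourierCoeffOn_of_hasDerivAt hab hn hf hf', norm_mul, one_div, norm_inv, div_eq_inv_mul]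
  have hnorm : ‖-2 * (π : ℂ) * I * n‖ = 2 * π * |(n : ℝ)| := by
    simp [abs_of_pos pi_pos]
  rw [hnorm]
  gcongr
  calc _ ≤ ‖fourier (-n) (a : AddCircle (b - a)) * (f b - f a)‖
        + ‖((b : ℂ) - a) * fourierCoeffOn hab f' n‖ := norm_sub_le _ _
    _ = _ := by
      rw [norm_mul, norm_mul, fourier_apply, Circle.norm_coe, one_mul, ← ofReal_sub,
        Complex.norm_real, Real.norm_of_nonneg (sub_pos.2 hab).le]

theorem summable_fourierCoeffOn_of_contDiff {a b : ℝ} (hab : a < b) {f : ℝ → ℂ}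
    (hf : ContDiff ℝ 2 f) (hper : f a = f b) : Summable (fourierCoeffOn hab f) := by
  have hf₁ : ContDiff ℝ 1 (deriv f) := hf.deriv'
  have hderiv : ∀ x ∈ uIcc a b, HasDerivAt f (deriv f x) x := fun x _ =>
    (hf.differentiable (by norm_num) x).hasDerivAt
  have hderiv₂ : ∀ x ∈ uIcc a b, HasDerivAt (deriv f) (deriv (deriv f) x) x := fun x _ =>
    (hf₁.differentiable one_ne_zero x).hasDerivAt
  have hcont₂ : Continuous (deriv (deriv f)) := hf₁.continuous_deriv le_rfl
  obtain ⟨M, hM⟩ :=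
    (isCompact_Icc (a := a) (b := b)).exists_bound_of_continuousOn hcont₂.continuousOn
  set C := (b - a) * (‖deriv f b - deriv f a‖ + (b - a) * M) / (2 * π) ^ 2
  refine .of_norm_bounded_eventually ((summable_one_div_int_pow.2 one_lt_two).mul_left C) ?_
  filter_upwards [(Set.finite_singleton (0 : ℤ)).compl_mem_cofinite] with n hn
  have hn : n ≠ 0 := hn
  have hba : 0 ≤ b - a := (sub_pos.2 hab).le
  have hcoeff₁ := norm_fourierCoeffOn_le_of_hasDerivAt hab hn hderiv₂
    (hcont₂.intervalIntegrable a b)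
  calc ‖fourierCoeffOn hab f n‖
      ≤ (‖f b - f a‖ + (b - a) * ‖fourierCoeffOn hab (deriv f) n‖) / (2 * π * |(n : ℝ)|) :=
        norm_fourierCoeffOn_le_of_hasDerivAt hab hn hderiv
          (hf₁.continuous.intervalIntegrable a b)
    _ ≤ (b - a) * ((‖deriv f b - deriv f a‖ + (b - a) * M) / (2 * π * |(n : ℝ)|)) /
          (2 * π * |(n : ℝ)|) := by
        rw [hper, sub_self, norm_zero, zero_add]
        gcongr
        refine hcoeff₁.trans ?_
        gcongr
        exact norm_fourierCoeffOn_le hab (fun x hx => hM x (Ioc_subset_Icc_self hx)) n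
    _ = C * (1 / (n : ℝ) ^ 2) := by
        rw [← sq_abs (n : ℝ)]
        simp only [C]
        field_simp

theorem hasSum_fourierCoeffOn_of_summable {a b : ℝ} (hab : a < b) {f : ℝ → ℂ}
    (hf : ContinuousOn f (Icc a b)) (hper : f a = f b) (hs : Summable (fourierCoeffOn hab f))
    {t : ℝ} (ht : t ∈ Icc a b) :
    HasSum (fun n => fourierCoeffOn hab f n • fourier n (t : AddCircle (b - a))) (f t) := by
  have : Fact (0 < b - a) := ⟨sub_pos.2 hab⟩
  have hb : a + (b - a) = b := add_sub_cancel a b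
  let F : C(AddCircle (b - a), ℂ) :=
    ⟨AddCircle.liftIoc (b - a) a f, AddCircle.liftIoc_continuous (by rwa [hb]) (by rwa [hb])⟩
  have hFt : F t = f t := by
    rcases ht.1.eq_or_lt with rfl | hat
    · calc F a = F ↑(a + (b - a)) := by rw [AddCircle.coe_add_period]
        _ = f (a + (b - a)) := AddCircle.liftIoc_coe_apply ⟨by linarith, le_rfl⟩
        _ = f a := by rw [hb, hper]
    · exact AddCircle.liftIoc_coe_apply (by rw [hb]; exact ⟨hat, ht.2⟩)
  rw [← hFt]
  exact has_pointwise_sum_fourier_series_of_summable (f := F) hs _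

theorem integral_neg_self_eq_integral_add_comp_neg {E : Type*} [NormedAddCommGroup E]
    [NormedSpace ℝ E] {f : ℝ → E} (hf : Continuous f) (a : ℝ) :
    ∫ x in -a..a, f x = ∫ x in 0..a, (f x + f (-x)) := by
  have hf_neg : Continuous fun x => f (-x) := hf.comp continuous_neg
  rw [intervalIntegral.integral_add (hf.intervalIntegrable 0 a) (hf_neg.intervalIntegrable 0 a),
    intervalIntegral.integral_comp_neg, neg_zero, add_comm,
    intervalIntegral.integral_add_adjacent_intervals
      (hf.intervalIntegrable _ _) (hf.intervalIntegrable _ _)]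

-- `fourierCoeffOn two_pi_pos` works on the circle of period `2 * π - 0`.
theorem fourier_coe_apply_two_pi (n : ℤ) (x : ℝ) :
    fourier n (x : AddCircle (2 * π - 0)) = exp (n * x * I) := by
  have hπ : (π : ℂ) ≠ 0 := ofReal_ne_zero.2 pi_ne_zero
  rw [fourier_coe_apply, sub_zero]
  push_cast
  congr 1
  field_simp

theorem fourier_neg_coe_add_pi (n : ℤ) (u : ℝ) :
    fourier (-n) ((u + π : ℝ) : AddCircle (2 * π - 0)) = (-1) ^ n * exp (-(n * u) * I) := by
  rw [fourier_coe_apply_two_pi, show ((-n : ℤ) : ℂ) * ((u + π : ℝ) : ℂ) * I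
      = n * (-(π * I)) + -(n * u) * I by push_cast; ring,
    Complex.exp_add, exp_int_mul, exp_neg_pi_mul_I]

theorem fourierCoeffOn_comp_sub_pi_of_even {h : ℝ → ℝ} (hc : Continuous h)
    (heven : ∀ u, h (-u) = h u) (n : ℤ) :
    fourierCoeffOn two_pi_pos (fun t => (h (t - π) : ℂ)) n =
      (((-1) ^ n / π * ∫ u in 0..π, Real.cos (n * u) * h u : ℝ) : ℂ) := by
  have hshift : ∫ x in 0..2 * π, fourier (-n) (x : AddCircle (2 * π - 0)) • (h (x - π) : ℂ) =
      (-1) ^ n * ∫ u in -π..π, exp (-(n * u) * I) * h u := by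
    have hsub := intervalIntegral.integral_comp_add_right (a := -π) (b := π)
      (fun x => fourier (-n) (x : AddCircle (2 * π - 0)) • (h (x - π) : ℂ)) π
    rw [neg_add_cancel, ← two_mul] at hsub
    rw [← hsub, ← intervalIntegral.integral_const_mul]
    refine intervalIntegral.integral_congr fun u _ => ?_
    rw [fourier_neg_coe_add_pi, add_sub_cancel_right, smul_eq_mul, mul_assoc]
  have hcont : Continuous fun u : ℝ => exp (-(n * u) * I) * h u := by fun_prop
  have hsymm : ∀ u : ℝ, exp (-(n * u) * I) * h u + exp (-(n * ((-u : ℝ) : ℂ)) * I) * h (-u) =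
      ((2 * (Real.cos (n * u) * h u) : ℝ) : ℂ) := by
    intro u
    push_cast
    rw [heven, ← mul_assoc, two_cos]
    ring_nf
  rw [fourierCoeffOn_eq_integral, hshift, integral_neg_self_eq_integral_add_comp_neg hcont]
  simp only [hsymm, intervalIntegral.integral_ofReal, intervalIntegral.integral_const_mul,
    sub_zero, real_smul]
  push_cast
  field_simp

/-- `lorentzInvMask σ (t - π) = 1 / Φ_L(t, σ)`: the reciprocal mask recentred at the origin. -/
noncomputable def lorentzInvMask (σ u : ℝ) : ℝ := Real.sinh (σ * π) / (σ * π * Real.cosh (σ * u))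

theorem lorentzInvMask_neg (σ u : ℝ) : lorentzInvMask σ (-u) = lorentzInvMask σ u := by
  rw [lorentzInvMask, lorentzInvMask, mul_neg, Real.cosh_neg]

theorem contDiff_lorentzInvMask {σ : ℝ} (hσ : σ ≠ 0) {n : WithTop ℕ∞} :
    ContDiff ℝ n (lorentzInvMask σ) :=
  contDiff_const.div (contDiff_const.mul (contDiff_cosh.comp (contDiff_const.mul contDiff_id)))
    fun _ => mul_ne_zero (mul_ne_zero hσ pi_ne_zero) (cosh_pos _).ne'

theorem fourierCoeffOn_lorentzInvMask {σ : ℝ} (hσ : σ ≠ 0) :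
    fourierCoeffOn two_pi_pos (fun t => (lorentzInvMask σ (t - π) : ℂ)) =
      fun n => (dL σ n : ℂ) := by
  ext n
  rw [fourierCoeffOn_comp_sub_pi_of_even (contDiff_lorentzInvMask hσ (n := 0)).continuous
    (lorentzInvMask_neg σ), dL]
  congr 1
  rw [← intervalIntegral.integral_const_mul, ← intervalIntegral.integral_const_mul]
  refine intervalIntegral.integral_congr fun u _ => ?_
  have := cosh_pos (σ * u)
  simp only [lorentzInvMask]
  field_simp

theorem dL_neg (σ : ℝ) (k : ℤ) : dL σ (-k) = dL σ k := by
  simp only [dL, zpow_neg, ← inv_zpow, inv_neg, inv_one, Int.cast_neg, neg_mul, Real.cos_neg]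

/-- For `σ > 0` and `t ∈ [0, 2π]`, the coefficients `d_{L,k}(σ)` are the Fourier
coefficients of the reciprocal of the mask `Φ_L(t,σ) = σπ·cosh(σ(t−π))/sinh(σπ)`:
`∑_{k∈ℤ} d_{L,k}(σ) e^{−ikt} = sinh(σπ)/(σπ·cosh(σ(t − π)))`. -/
theorem lorentz_nod_mask (σ : ℝ) (hσ : 0 < σ) :
    ∀ t ∈ Set.Icc (0 : ℝ) (2 * π),
      (∑' k : ℤ, (dL σ k : ℂ) * Complex.exp (-Complex.I * (k : ℂ) * (t : ℂ))) =
        ((Real.sinh (σ * π) / (σ * π * Real.cosh (σ * (t - π))) : ℝ) : ℂ) := by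
  intro t ht
  set g : ℝ → ℂ := fun t => (lorentzInvMask σ (t - π) : ℂ)
  have hg : ContDiff ℝ 2 g :=
    ofRealCLM.contDiff.comp ((contDiff_lorentzInvMask hσ.ne').comp (by fun_prop))
  have hper : g 0 = g (2 * π) := by
    simp only [g, zero_sub, lorentzInvMask_neg, two_mul, add_sub_cancel_right]
  have hsum := hasSum_fourierCoeffOn_of_summable two_pi_pos hg.continuous.continuousOn hper
    (summable_fourierCoeffOn_of_contDiff two_pi_pos hg hper) ht
  rw [fourierCoeffOn_lorentzInvMask hσ.ne', ← (Equiv.neg ℤ).hasSum_iff] at hsum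
  refine (tsum_congr fun k => ?_).trans hsum.tsum_eq
  simp only [Function.comp_apply, Equiv.neg_apply, dL_neg, fourier_coe_apply_two_pi, smul_eq_mul]
  congr 2
  push_cast
  ring
end

section
/- Let σ > 0 and define P̃_L(ω, σ) = (sinh²(σπ)/sinh(2σπ)) · cosh(2σ(ω − π))/cosh²(σ(ω − π)) for ω ∈ [0, 2π]. Then P̃_L(ω, σ) = (sinh²(σπ)/sinh(2σπ)) · (2 − 1/cosh²(σ(ω − π))); it attains its minimum over [0, 2π] at ω = π, with value Ã_L(σ) = sinh²(σπ)/sinh(2σπ), and its maximum at ω = 0 (and ω = 2π), with value B̃_L(σ) = (sinh²(σπ)/sinh(2σπ)) · (2 − 1/cosh²(σπ)). -/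
/-!
Since `cosh (2x) = 2 cosh² x - 1`, the factor `cosh (2σ(ω - π)) / cosh² (σ(ω - π))` equals
`2 - 1 / cosh² (σ(ω - π))`, which depends on `ω` only through `|ω - π|` and increases with it,
because `cosh` is even and increasing on `[0, ∞)`. On `[0, 2π]` it therefore ranges from `1`
(at `ω = π`) to `2 - 1 / cosh² (σπ)` (at `ω = 0, 2π`); the constant in front is nonnegative
for `σ ≥ 0`.
-/

open Real

lemma Real.cosh_two_mul_div_cosh_sq (x : ℝ) : cosh (2 * x) / cosh x ^ 2 = 2 - 1 / cosh x ^ 2 := by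
  have hx : cosh x ^ 2 ≠ 0 := by positivity
  field_simp
  rw [cosh_two_mul, cosh_sq]
  ring

lemma Real.one_div_cosh_sq_le_of_abs_le {x y : ℝ} (h : |x| ≤ |y|) : 1 / cosh y ^ 2 ≤ 1 / cosh x ^ 2 := by
  have hxy : cosh x ≤ cosh y := cosh_le_cosh.2 h
  gcongr

lemma Real.one_le_two_sub_one_div_cosh_sq (x : ℝ) : 1 ≤ 2 - 1 / cosh x ^ 2 := by
  have h : 1 / cosh x ^ 2 ≤ 1 / cosh 0 ^ 2 := one_div_cosh_sq_le_of_abs_le (by simp)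
  rw [cosh_zero] at h
  linarith

lemma Real.sinh_sq_div_sinh_two_mul_nonneg {x : ℝ} (hx : 0 ≤ x) : 0 ≤ sinh x ^ 2 / sinh (2 * x) :=
  div_nonneg (sq_nonneg _) (sinh_nonneg_iff.2 (by positivity))

/-- For `σ > 0`, the function
`P̃_L(ω,σ) = (sinh²(σπ)/sinh(2σπ))·cosh(2σ(ω−π))/cosh²(σ(ω−π))` on `[0, 2π]`
equals `(sinh²(σπ)/sinh(2σπ))·(2 − 1/cosh²(σ(ω−π)))`, attains its minimum at
`ω = π` with value `Ã_L(σ) = sinh²(σπ)/sinh(2σπ)`, and its maximum at `ω = 0`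
(and `ω = 2π`) with value `B̃_L(σ) = (sinh²(σπ)/sinh(2σπ))·(2 − 1/cosh²(σπ))`. -/
theorem lorentz_nod_riesz_function (σ : ℝ) (hσ : 0 < σ) :
    (∀ ω : ℝ,
      Real.sinh (σ * π) ^ 2 / Real.sinh (2 * σ * π) *
          (Real.cosh (2 * σ * (ω - π)) / Real.cosh (σ * (ω - π)) ^ 2) =
        Real.sinh (σ * π) ^ 2 / Real.sinh (2 * σ * π) *
          (2 - 1 / Real.cosh (σ * (ω - π)) ^ 2)) ∧
    (∀ ω ∈ Set.Icc (0 : ℝ) (2 * π),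
      Real.sinh (σ * π) ^ 2 / Real.sinh (2 * σ * π) ≤
        Real.sinh (σ * π) ^ 2 / Real.sinh (2 * σ * π) *
          (Real.cosh (2 * σ * (ω - π)) / Real.cosh (σ * (ω - π)) ^ 2)) ∧
    Real.sinh (σ * π) ^ 2 / Real.sinh (2 * σ * π) *
        (Real.cosh (2 * σ * (π - π)) / Real.cosh (σ * (π - π)) ^ 2) =
      Real.sinh (σ * π) ^ 2 / Real.sinh (2 * σ * π) ∧
    (∀ ω ∈ Set.Icc (0 : ℝ) (2 * π),
      Real.sinh (σ * π) ^ 2 / Real.sinh (2 * σ * π) *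
          (Real.cosh (2 * σ * (ω - π)) / Real.cosh (σ * (ω - π)) ^ 2) ≤
        Real.sinh (σ * π) ^ 2 / Real.sinh (2 * σ * π) *
          (2 - 1 / Real.cosh (σ * π) ^ 2)) ∧
    Real.sinh (σ * π) ^ 2 / Real.sinh (2 * σ * π) *
        (Real.cosh (2 * σ * (0 - π)) / Real.cosh (σ * (0 - π)) ^ 2) =
      Real.sinh (σ * π) ^ 2 / Real.sinh (2 * σ * π) *
        (2 - 1 / Real.cosh (σ * π) ^ 2) ∧
    Real.sinh (σ * π) ^ 2 / Real.sinh (2 * σ * π) *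
        (Real.cosh (2 * σ * (2 * π - π)) / Real.cosh (σ * (2 * π - π)) ^ 2) =
      Real.sinh (σ * π) ^ 2 / Real.sinh (2 * σ * π) *
        (2 - 1 / Real.cosh (σ * π) ^ 2) := by
  have hC : 0 ≤ sinh (σ * π) ^ 2 / sinh (2 * σ * π) := by
    rw [mul_assoc]
    exact sinh_sq_div_sinh_two_mul_nonneg (by positivity)
  set C := sinh (σ * π) ^ 2 / sinh (2 * σ * π)
  have hP : ∀ ω : ℝ, C * (cosh (2 * σ * (ω - π)) / cosh (σ * (ω - π)) ^ 2) =
      C * (2 - 1 / cosh (σ * (ω - π)) ^ 2) := fun ω => by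
    rw [mul_assoc 2 σ, cosh_two_mul_div_cosh_sq]
  refine ⟨hP, fun ω _ => ?_, ?_, fun ω hω => ?_, ?_, ?_⟩
  · rw [hP]
    exact le_mul_of_one_le_right hC (one_le_two_sub_one_div_cosh_sq _)
  · rw [hP, sub_self, mul_zero, cosh_zero]
    norm_num
  · have hdist : |σ * (ω - π)| ≤ |σ * π| := by
      rw [abs_mul, abs_mul, abs_of_pos pi_pos]
      gcongr
      rw [abs_le]
      constructor <;> linarith [hω.1, hω.2]
    rw [hP]
    gcongr C * (2 - ?_)
    exact one_div_cosh_sq_le_of_abs_le hdist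
  · rw [hP, zero_sub, mul_neg, cosh_neg]
  · rw [hP, show 2 * π - π = π by ring]
end

section
/- Let σ > 0. For every real ω one has (∑_{k∈ℤ} exp(−σ²(ω + 2πk)²)) / (∑_{k∈ℤ} exp(−σ²(ω + 2πk)²/2))² = σ√π · θ₃(ω/2, e^{−1/(4σ²)}) / (θ₃(ω/2, e^{−1/(2σ²)}))², where θ₃(t, q) = ∑_{n∈ℤ} q^{n²} cos(2nt). -/
/-!
Both series are periodizations of a Gaussian. Poisson summation (Jacobi's transformation
formula) turns `∑ₖ exp(-c (ω + 2πk)²)` into `θ₃(ω/2, e^{-1/(4c)}) / (2√(πc))`; applied with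
`c = σ²` and `c = σ²/2` it reduces the identity to algebra.
-/

open Real

/-- The third Jacobi theta function `θ₃(t, q) = ∑_{n∈ℤ} q^{n²} cos(2nt)`. -/
noncomputable def theta3 (t q : ℝ) : ℝ :=
  ∑' n : ℤ, q ^ ((n : ℝ) ^ 2) * Real.cos (2 * n * t)

open Complex

lemma summable_cexp_neg_mul_int_sq_add {a : ℝ} (ha : 0 < a) (t : ℝ) :
    Summable fun n : ℤ => cexp (-a * n ^ 2 + 2 * n * t * I) := by
  have hτ : 0 < (I * a / π).im := by
    rw [div_ofReal_im, I_mul_im, ofReal_re]; positivity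
  refine ((summable_jacobiTheta₂_term_iff (t / π) _).2 hτ).congr fun n => ?_
  rw [jacobiTheta₂_term]
  congr 1
  field_simp
  ring_nf
  rw [I_sq]
  ring

lemma theta3_exp_neg_eq_re_tsum {a : ℝ} (ha : 0 < a) (t : ℝ) :
    theta3 t (Real.exp (-a)) = (∑' n : ℤ, cexp (-a * n ^ 2 + 2 * n * t * I)).re := by
  rw [re_tsum (summable_cexp_neg_mul_int_sq_add ha t), theta3]
  refine tsum_congr fun n => ?_
  rw [exp_re, ← Real.exp_mul]
  simp [← ofReal_intCast, ← ofReal_pow]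

lemma tsum_exp_neg_mul_add_two_pi_mul_sq {c : ℝ} (hc : 0 < c) (ω : ℝ) :
    ∑' k : ℤ, Real.exp (-c * (ω + 2 * π * k) ^ 2) =
      theta3 (ω / 2) (Real.exp (-1 / (4 * c))) / (2 * √(π * c)) := by
  have ha : 0 < ((1 / (4 * π * c) : ℝ) : ℂ).re := by rw [ofReal_re]; positivity
  -- with these parameters the left side is the theta series and the right side the
  -- Gaussian periodization, summed over `-k`
  have poisson := Complex.tsum_exp_neg_quadratic ha (I * ω / (2 * π))
  have hlhs (n : ℤ) :
      cexp (-π * ((1 / (4 * π * c) : ℝ) : ℂ) * n ^ 2 + 2 * π * (I * ω / (2 * π)) * n) =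
        cexp (-(1 / (4 * c) : ℝ) * n ^ 2 + 2 * n * (ω / 2 : ℝ) * I) := by
    congr 1; push_cast; field_simp
  have hrhs (n : ℤ) :
      cexp (-π / ((1 / (4 * π * c) : ℝ) : ℂ) * (n + I * (I * ω / (2 * π))) ^ 2) =
        (Real.exp (-c * (ω + 2 * π * (-n : ℤ)) ^ 2) : ℂ) := by
    rw [ofReal_exp, ← mul_div_assoc, ← mul_assoc I, I_mul_I]
    congr 1; push_cast; field_simp; ring
  have hsqrt : 1 / ((1 / (4 * π * c) : ℝ) : ℂ) ^ (1 / 2 : ℂ) = ((2 * √(π * c) : ℝ) : ℂ) := by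
    rw [show (1 / 2 : ℂ) = ((1 / 2 : ℝ) : ℂ) by norm_num, ← ofReal_cpow (by positivity),
      ← sqrt_eq_rpow, ← ofReal_one, ← ofReal_div, one_div (4 * π * c), sqrt_inv, one_div,
      inv_inv, show 4 * π * c = 2 ^ 2 * (π * c) by ring, sqrt_mul (by positivity),
      sqrt_sq zero_le_two]
  have hneg : ∑' n : ℤ, Real.exp (-c * (ω + 2 * π * (-n : ℤ)) ^ 2) =
      ∑' k : ℤ, Real.exp (-c * (ω + 2 * π * k) ^ 2) :=
    (Equiv.neg ℤ).tsum_eq fun k => Real.exp (-c * (ω + 2 * π * k) ^ 2)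
  rw [tsum_congr hlhs, tsum_congr hrhs, hsqrt, ← ofReal_tsum, hneg] at poisson
  rw [neg_div, theta3_exp_neg_eq_re_tsum (by positivity), poisson, ← ofReal_mul, ofReal_re]
  field_simp

/-- For `σ > 0` and any real `ω`,
`(∑_{k∈ℤ} e^{−σ²(ω+2πk)²}) / (∑_{k∈ℤ} e^{−σ²(ω+2πk)²/2})²
  = σ√π·θ₃(ω/2, e^{−1/(4σ²)})/(θ₃(ω/2, e^{−1/(2σ²)}))²`. -/
theorem gauss_nod_riesz_function_theta (σ : ℝ) (hσ : 0 < σ) (ω : ℝ) :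
    (∑' k : ℤ, Real.exp (-σ ^ 2 * (ω + 2 * π * k) ^ 2)) /
        (∑' k : ℤ, Real.exp (-σ ^ 2 * (ω + 2 * π * k) ^ 2 / 2)) ^ 2 =
      σ * Real.sqrt π * theta3 (ω / 2) (Real.exp (-1 / (4 * σ ^ 2))) /
        (theta3 (ω / 2) (Real.exp (-1 / (2 * σ ^ 2)))) ^ 2 := by
  have hhalf (k : ℤ) :
      -σ ^ 2 * (ω + 2 * π * k) ^ 2 / 2 = -(σ ^ 2 / 2) * (ω + 2 * π * k) ^ 2 := by ring
  rw [tsum_exp_neg_mul_add_two_pi_mul_sq (by positivity),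
    tsum_congr fun k => congrArg Real.exp (hhalf k),
    tsum_exp_neg_mul_add_two_pi_mul_sq (by positivity),
    show 4 * (σ ^ 2 / 2) = 2 * σ ^ 2 by ring, div_pow, mul_pow,
    sq_sqrt (by positivity), sqrt_mul pi_pos.le, sqrt_sq hσ.le]
  field_simp [(sqrt_pos.2 pi_pos).ne']
  rw [sq_sqrt pi_pos.le]
end

section
/- Let q ∈ (0,1). For every real t one has θ₃(t, q)/(θ₃(t, q²))² = (1/θ₃(0, q)) · (1 + (θ₂(t, q²)/θ₃(t, q²))²), where θ₃(t, q) = ∑_{n∈ℤ} q^{n²} cos(2nt) and θ₂(t, q) = 2∑_{n=0}^∞ q^{(n+1/2)²} cos((2n+1)t). -/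
/-!
Multiplying the series of `θ₃(t, q)` and `θ₃(0, q)` gives the double sum of
`q^{m² + n²} cos 2mt` over `(m, n) ∈ ℤ²`. Split it by the parity of `m + n` and write
`m = r + s + k`, `n = r - s` with `k ∈ {0, 1}`; then `m² + n² = 2(r + k/2)² + 2(s + k/2)²`, and
`cos(a + b) = cos a cos b - sin a sin b` turns each half into a product of two series in `q²`,
in which the sine series vanishes by oddness. The even half is `θ₃(t, q²)²` and the odd half
`θ₂(t, q²)²`, so `θ₃(t, q) θ₃(0, q) = θ₃(t, q²)² + θ₂(t, q²)²`, which is the claim once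
`θ₃(t, q²) ≠ 0`.

The same identity gives `θ₃ > 0`: for `q < 1/3` the `n = 0` terms yield
`θ₃(t, q) ≥ 2 - θ₃(0, q) > 0`, and the identity carries positivity from `q²` to `q`, so an
induction on `n` with `q^{2^n} < 1/3` covers every `q ∈ (0, 1)`.
-/

open Real

/-- The second Jacobi theta function `θ₂(t, q) = 2∑_{n≥0} q^{(n+1/2)²} cos((2n+1)t)`. -/
noncomputable def theta2 (t q : ℝ) : ℝ :=
  2 * ∑' n : ℕ, q ^ (((n : ℝ) + 1 / 2) ^ 2) * Real.cos ((2 * n + 1) * t)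

def intProdParityEquiv : (ℤ × ℤ) ⊕ (ℤ × ℤ) ≃ ℤ × ℤ where
  toFun := Sum.elim (fun p => (p.1 + p.2, p.1 - p.2)) (fun p => (p.1 + p.2 + 1, p.1 - p.2))
  invFun p :=
    if (p.1 + p.2) % 2 = 0 then .inl ((p.1 + p.2) / 2, (p.1 - p.2) / 2)
    else .inr ((p.1 + p.2 - 1) / 2, (p.1 - p.2 - 1) / 2)
  left_inv := by
    rintro (⟨r, s⟩ | ⟨r, s⟩)
    · have h : (r + s + (r - s)) % 2 = 0 := by omega
      simp only [Sum.elim_inl, h, if_true, Sum.inl.injEq, Prod.mk.injEq]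
      omega
    · have h : ¬ (r + s + 1 + (r - s)) % 2 = 0 := by omega
      simp only [Sum.elim_inr, h, if_false, Sum.inr.injEq, Prod.mk.injEq]
      omega
  right_inv := by
    rintro ⟨m, n⟩
    by_cases h : (m + n) % 2 = 0
    · simp only [h, if_true, Sum.elim_inl, Prod.mk.injEq]
      omega
    · simp only [h, if_false, Sum.elim_inr, Prod.mk.injEq]
      omega

theorem HasSum.of_int_prod_parity {M : Type*} [AddCommMonoid M] [TopologicalSpace M]
    [ContinuousAdd M] {f : ℤ × ℤ → M} {a b : M}
    (heven : HasSum (fun p : ℤ × ℤ => f (p.1 + p.2, p.1 - p.2)) a)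
    (hodd : HasSum (fun p : ℤ × ℤ => f (p.1 + p.2 + 1, p.1 - p.2)) b) :
    HasSum f (a + b) :=
  intProdParityEquiv.hasSum_iff.mp (heven.sum hodd)

theorem tsum_eq_zero_of_apply_equiv_eq_neg {α : Type*} {f : α → ℝ} (e : α ≃ α)
    (h : ∀ x, f (e x) = -f x) : ∑' x, f x = 0 := by
  have := e.tsum_eq f
  rw [tsum_congr h, tsum_neg] at this
  linarith

theorem hasSum_pow_natAbs {q : ℝ} (hq0 : 0 ≤ q) (hq1 : q < 1) :
    HasSum (fun n : ℤ => q ^ n.natAbs) ((1 + q) / (1 - q)) := by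
  have hgeom := hasSum_geometric_of_lt_one hq0 hq1
  have h := HasSum.of_nat_of_neg (f := fun n : ℤ => q ^ n.natAbs) (by simpa using hgeom)
    (by simpa using hgeom)
  have hq1' : 1 - q ≠ 0 := by linarith
  rwa [Int.natAbs_zero, pow_zero, show (1 - q)⁻¹ + (1 - q)⁻¹ - 1 = (1 + q) / (1 - q) by
    field_simp; ring] at h

theorem abs_le_add_sq_add_abs_add_one (x c : ℝ) : |x| ≤ (x + c) ^ 2 + (|c| + 1) := by
  have htri : |x| ≤ |x + c| + |c| := by simpa using abs_sub (x + c) c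
  nlinarith [sq_abs (x + c), sq_nonneg (|x + c| - 1)]

theorem summable_rpow_int_add_sq {q : ℝ} (hq0 : 0 < q) (hq1 : q < 1) (c : ℝ) :
    Summable fun n : ℤ => q ^ (((n : ℝ) + c) ^ 2) := by
  refine Summable.of_nonneg_of_le (fun n => (rpow_pos_of_pos hq0 _).le) (fun n => ?_)
    ((hasSum_pow_natAbs hq0.le hq1).summable.mul_left (q ^ (-(|c| + 1))))
  have hexp : |(n : ℝ)| - (|c| + 1) ≤ ((n : ℝ) + c) ^ 2 := by
    linarith [abs_le_add_sq_add_abs_add_one (n : ℝ) c]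
  calc q ^ (((n : ℝ) + c) ^ 2) ≤ q ^ (|(n : ℝ)| - (|c| + 1)) :=
        rpow_le_rpow_of_exponent_ge hq0 hq1.le hexp
    _ = q ^ (-(|c| + 1)) * q ^ n.natAbs := by
        rw [sub_eq_neg_add, rpow_add hq0, ← Int.cast_abs, ← Nat.cast_natAbs, rpow_natCast]

theorem summable_rpow_int_sq {q : ℝ} (hq0 : 0 < q) (hq1 : q < 1) :
    Summable fun n : ℤ => q ^ ((n : ℝ) ^ 2) := by
  simpa using summable_rpow_int_add_sq hq0 hq1 0

theorem theta3_zero_eq_tsum (q : ℝ) : theta3 0 q = ∑' n : ℤ, q ^ ((n : ℝ) ^ 2) := by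
  simp only [theta3, mul_zero, cos_zero, mul_one]

noncomputable def thetaCosTerm (q t x : ℝ) : ℝ := q ^ (x ^ 2) * cos (2 * x * t)

noncomputable def thetaSinTerm (q t x : ℝ) : ℝ := q ^ (x ^ 2) * sin (2 * x * t)

section Terms

variable {q : ℝ} (t : ℝ)

theorem thetaCosTerm_neg (x : ℝ) : thetaCosTerm q t (-x) = thetaCosTerm q t x := by
  rw [thetaCosTerm, thetaCosTerm, neg_sq, mul_neg, neg_mul, cos_neg]

theorem thetaSinTerm_neg (x : ℝ) : thetaSinTerm q t (-x) = -thetaSinTerm q t x := by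
  rw [thetaSinTerm, thetaSinTerm, neg_sq, mul_neg, neg_mul, sin_neg, mul_neg]

theorem thetaCosTerm_add_mul_rpow_sub_sq (hq0 : 0 < q) (x y : ℝ) :
    thetaCosTerm q t (x + y) * q ^ ((x - y) ^ 2) =
      thetaCosTerm (q ^ 2) t x * thetaCosTerm (q ^ 2) t y -
        thetaSinTerm (q ^ 2) t x * thetaSinTerm (q ^ 2) t y := by
  have hpow : q ^ ((x + y) ^ 2) * q ^ ((x - y) ^ 2) = (q ^ 2) ^ (x ^ 2) * (q ^ 2) ^ (y ^ 2) := by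
    rw [← rpow_natCast q 2, ← rpow_mul hq0.le, ← rpow_mul hq0.le, ← rpow_add hq0,
      ← rpow_add hq0]
    ring_nf
  simp only [thetaCosTerm, thetaSinTerm]
  rw [show 2 * (x + y) * t = 2 * x * t + 2 * y * t by ring, cos_add]
  linear_combination (cos (2 * x * t) * cos (2 * y * t) - sin (2 * x * t) * sin (2 * y * t)) * hpow

theorem tsum_thetaSinTerm_int_add_half (k : ℤ) : ∑' n : ℤ, thetaSinTerm q t (n + k / 2) = 0 :=
  tsum_eq_zero_of_apply_equiv_eq_neg (Equiv.subLeft (-k)) fun n => by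
    rw [Equiv.subLeft_apply, ← thetaSinTerm_neg]
    push_cast
    ring_nf

variable (hq0 : 0 < q) (hq1 : q < 1)
include hq0 hq1

theorem summable_norm_thetaCosTerm_int_add (c : ℝ) :
    Summable fun n : ℤ => ‖thetaCosTerm q t (n + c)‖ :=
  (summable_rpow_int_add_sq hq0 hq1 c).of_nonneg_of_le (fun _ => norm_nonneg _) fun n => by
    rw [thetaCosTerm, norm_mul, norm_of_nonneg (rpow_pos_of_pos hq0 _).le]
    exact mul_le_of_le_one_right (rpow_pos_of_pos hq0 _).le (abs_cos_le_one _)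

theorem summable_norm_thetaSinTerm_int_add (c : ℝ) :
    Summable fun n : ℤ => ‖thetaSinTerm q t (n + c)‖ :=
  (summable_rpow_int_add_sq hq0 hq1 c).of_nonneg_of_le (fun _ => norm_nonneg _) fun n => by
    rw [thetaSinTerm, norm_mul, norm_of_nonneg (rpow_pos_of_pos hq0 _).le]
    exact mul_le_of_le_one_right (rpow_pos_of_pos hq0 _).le (abs_sin_le_one _)

theorem theta2_eq_tsum_int : theta2 t q = ∑' n : ℤ, thetaCosTerm q t (n + 1 / 2) := by
  have hsymm (n : ℕ) :
      thetaCosTerm q t ((-(n + 1) : ℤ) + 1 / 2) = thetaCosTerm q t (n + 1 / 2) := by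
    rw [← thetaCosTerm_neg]
    push_cast
    ring_nf
  rw [theta2, ← tsum_nat_add_neg_add_one
    (summable_norm_thetaCosTerm_int_add t hq0 hq1 (1 / 2)).of_norm, ← tsum_mul_left]
  congr 1 with n
  rw [hsymm]
  simp only [thetaCosTerm]
  push_cast
  ring_nf

theorem hasSum_thetaCosTerm_mul_rpow_sq (k : ℤ) :
    HasSum
      (fun p : ℤ × ℤ => thetaCosTerm q t ((p.1 + p.2 + k : ℤ) : ℝ) * q ^ (((p.1 - p.2 : ℤ) : ℝ) ^ 2))
      ((∑' n : ℤ, thetaCosTerm (q ^ 2) t (n + k / 2)) ^ 2) := by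
  have hq20 : 0 < q ^ 2 := by positivity
  have hq21 : q ^ 2 < 1 := pow_lt_one₀ hq0.le hq1 two_ne_zero
  have hcos := summable_norm_thetaCosTerm_int_add t hq20 hq21 (k / 2)
  have hsin := summable_norm_thetaSinTerm_int_add t hq20 hq21 (k / 2)
  have hcosSum := hcos.of_norm.hasSum
  have hsinSum : HasSum (fun n : ℤ => thetaSinTerm (q ^ 2) t (n + k / 2)) 0 := by
    rw [← tsum_thetaSinTerm_int_add_half t k]
    exact hsin.of_norm.hasSum
  have hcc := summable_mul_of_summable_norm hcos hcos
  have hss := summable_mul_of_summable_norm hsin hsin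
  have h := (hcosSum.mul hcosSum hcc).sub (hsinSum.mul hsinSum hss)
  rw [mul_zero, sub_zero, ← sq] at h
  refine h.congr_fun fun p => ?_
  rw [← thetaCosTerm_add_mul_rpow_sub_sq t hq0]
  push_cast
  ring_nf

theorem theta3_mul_theta3_zero :
    theta3 t q * theta3 0 q = theta3 t (q ^ 2) ^ 2 + theta2 t (q ^ 2) ^ 2 := by
  have hcos := summable_norm_thetaCosTerm_int_add t hq0 hq1 0
  simp only [add_zero] at hcos
  have hgauss : Summable fun n : ℤ => ‖q ^ ((n : ℝ) ^ 2)‖ := by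
    simpa using (summable_rpow_int_sq hq0 hq1).abs
  have htheta : HasSum (fun n : ℤ => thetaCosTerm q t n) (theta3 t q) := hcos.of_norm.hasSum
  have htheta0 : HasSum (fun n : ℤ => q ^ ((n : ℝ) ^ 2)) (theta3 0 q) := by
    rw [theta3_zero_eq_tsum]
    exact hgauss.of_norm.hasSum
  have hsummable := summable_mul_of_summable_norm hcos hgauss
  have heven := hasSum_thetaCosTerm_mul_rpow_sq t hq0 hq1 0
  have hodd := hasSum_thetaCosTerm_mul_rpow_sq t hq0 hq1 1
  simp only [add_zero, Int.cast_zero, zero_div, Int.cast_one] at heven hodd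
  rw [(htheta.mul htheta0 hsummable).unique (heven.of_int_prod_parity hodd),
    theta2_eq_tsum_int t (pow_pos hq0 2) (pow_lt_one₀ hq0.le hq1 two_ne_zero)]
  rfl

end Terms

section Positivity

variable {q : ℝ} (hq0 : 0 < q) (hq1 : q < 1)
include hq0 hq1

theorem theta3_zero_pos : 0 < theta3 0 q := by
  rw [theta3_zero_eq_tsum]
  exact (summable_rpow_int_sq hq0 hq1).tsum_pos (fun n => (rpow_pos_of_pos hq0 _).le) 0
    (rpow_pos_of_pos hq0 _)

theorem two_sub_theta3_zero_le_theta3 (t : ℝ) : 2 - theta3 0 q ≤ theta3 t q := by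
  have hgauss := summable_rpow_int_sq hq0 hq1
  have hcos : Summable fun n : ℤ => thetaCosTerm q t n := by
    simpa using (summable_norm_thetaCosTerm_int_add t hq0 hq1 0).of_norm
  have hsum : theta3 t q + theta3 0 q = ∑' n : ℤ, (thetaCosTerm q t n + q ^ ((n : ℝ) ^ 2)) := by
    rw [theta3_zero_eq_tsum, hcos.tsum_add hgauss]
    rfl
  have hzero : thetaCosTerm q t ((0 : ℤ) : ℝ) + q ^ (((0 : ℤ) : ℝ) ^ 2) = 2 := by
    norm_num [thetaCosTerm]
  have hle := (hcos.add hgauss).le_tsum 0 fun n _ => by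
    have := neg_one_le_cos (2 * n * t)
    rw [thetaCosTerm]
    nlinarith [rpow_pos_of_pos hq0 ((n : ℝ) ^ 2)]
  linarith

theorem theta3_zero_lt_two (hq : q < 1 / 3) : theta3 0 q < 2 := by
  have hle : theta3 0 q ≤ (1 + q) / (1 - q) := by
    rw [theta3_zero_eq_tsum]
    refine hasSum_le (fun n => ?_) (summable_rpow_int_sq hq0 hq1).hasSum
      (hasSum_pow_natAbs hq0.le hq1)
    have hexp : |(n : ℝ)| ≤ (n : ℝ) ^ 2 := by exact_mod_cast Int.natAbs_le_self_sq n
    rw [← rpow_natCast q n.natAbs, Nat.cast_natAbs, Int.cast_abs]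
    exact rpow_le_rpow_of_exponent_ge hq0 hq1.le hexp
  have hlt : (1 + q) / (1 - q) < 2 := by
    rw [div_lt_iff₀ (by linarith)]
    linarith
  linarith

end Positivity

theorem theta3_pos_of_pow_two_pow_lt {q : ℝ} (hq0 : 0 < q) (hq1 : q < 1) (n : ℕ)
    (hq : q ^ 2 ^ n < 1 / 3) (t : ℝ) : 0 < theta3 t q := by
  induction n generalizing q with
  | zero =>
    rw [pow_zero, pow_one] at hq
    linarith [two_sub_theta3_zero_le_theta3 hq0 hq1 t, theta3_zero_lt_two hq0 hq1 hq]
  | succ n ih =>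
    have hsq := ih (pow_pos hq0 2) (pow_lt_one₀ hq0.le hq1 two_ne_zero)
      (by rwa [← pow_mul, ← pow_succ'])
    have hprod : 0 < theta3 t q * theta3 0 q := by
      rw [theta3_mul_theta3_zero t hq0 hq1]
      exact add_pos_of_pos_of_nonneg (pow_pos hsq 2) (sq_nonneg _)
    exact pos_of_mul_pos_left hprod (theta3_zero_pos hq0 hq1).le

theorem theta3_pos {q : ℝ} (hq0 : 0 < q) (hq1 : q < 1) (t : ℝ) : 0 < theta3 t q := by
  obtain ⟨n, hn⟩ := exists_pow_lt_of_lt_one (by norm_num : (0 : ℝ) < 1 / 3) hq1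
  refine theta3_pos_of_pow_two_pow_lt hq0 hq1 n ?_ t
  exact (pow_le_pow_of_le_one hq0.le hq1.le n.lt_two_pow_self.le).trans_lt hn

/-- For `q ∈ (0,1)` and every real `t`,
`θ₃(t, q)/(θ₃(t, q²))² = (1/θ₃(0, q))·(1 + (θ₂(t, q²)/θ₃(t, q²))²)`. -/
theorem theta_ratio_watson (q : ℝ) (hq : q ∈ Set.Ioo (0 : ℝ) 1) (t : ℝ) :
    theta3 t q / (theta3 t (q ^ 2)) ^ 2 =
      1 / theta3 0 q * (1 + (theta2 t (q ^ 2) / theta3 t (q ^ 2)) ^ 2) := by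
  obtain ⟨hq0, hq1⟩ := hq
  have hsq := (theta3_pos (pow_pos hq0 2) (pow_lt_one₀ hq0.le hq1 two_ne_zero) t).ne'
  have hzero := (theta3_zero_pos hq0 hq1).ne'
  field_simp
  linear_combination theta3_mul_theta3_zero t hq0 hq1
end

section
/- Let θ₃(t, q) = ∑_{n∈ℤ} q^{n²} cos(2nt). Then lim_{σ→∞} σ√π · θ₃(π/2, e^{−1/(4σ²)}) / (θ₃(π/2, e^{−1/(2σ²)}))² = 1/2 and lim_{σ→∞} σ√π · θ₃(0, e^{−1/(4σ²)}) / (θ₃(0, e^{−1/(2σ²)}))² = 1. Equivalently, the lower Riesz constant Ã_G(σ) of the system of integer shifts of the Gaussian nod function tends to 1/2, and the upper Riesz constant B̃_G(σ) tends to 1, as σ → ∞. -/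
/-!
Poisson summation turns the theta values at `q = e^{-c}` with `c` of order `σ⁻²` into rapidly
converging sums: with `S(a) = ∑_{n∈ℤ} e^{-an²}` one has `θ₃(0, e^{-c}) = √(π/c) S(π²/c)`, and
splitting `θ₃(π/2, e^{-c}) = ∑ (-1)ⁿ e^{-cn²} = 2 S(4c) - S(c)` into even and odd terms gives
`√(π/c) D(π²/(4c))`, where `D(a) = S(a) - S(4a)` is the sum over odd `n`. For `a = π²σ²` the
prefactors cancel and the two quotients become `S(4a)/S(2a)²` and `D(a)/D(a/2)²`. As `a → ∞`,
`S(a) → 1`, while `e^{-a} ≤ ∑_{n≥1} e^{-an²} ≤ e^{-a}/(1 - e^{-a})` gives `D(a) ~ 2e^{-a}`,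
so the quotients tend to `1` and `2/2² = 1/2`.
-/

open Real Filter

open Topology

noncomputable def thetaSum (a : ℝ) : ℝ := ∑' n : ℤ, exp (-a * n ^ 2)

/-- The sum `∑_{n odd} e^{-an²}`. -/
noncomputable def oddThetaSum (a : ℝ) : ℝ := thetaSum a - thetaSum (4 * a)

section

variable {a : ℝ}

lemma summable_exp_neg_mul_int_sq (ha : 0 < a) : Summable fun n : ℤ ↦ exp (-a * n ^ 2) := by
  have hnat : Summable fun n : ℕ ↦ exp (-a * (n : ℝ) ^ 2) :=
    summable_exp_nat_mul_of_ge (neg_lt_zero.mpr ha) fun n ↦ by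
      exact_mod_cast Nat.le_self_pow two_ne_zero n
  exact .of_nat_of_neg (by simpa using hnat) (by simpa using hnat)

lemma thetaSum_sub_one_eq (ha : 0 < a) :
    thetaSum a - 1 = 2 * ∑' n : ℕ, exp (-a * ((n : ℝ) + 1) ^ 2) := by
  rw [thetaSum, tsum_int_eq_zero_add_two_mul_tsum_pnat (fun n ↦ by simp)
    (summable_exp_neg_mul_int_sq ha),
    tsum_pnat_eq_tsum_succ (f := fun n : ℕ ↦ exp (-a * ((n : ℤ) : ℝ) ^ 2))]
  simp

lemma summable_exp_neg_mul_succ_sq (ha : 0 < a) :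
    Summable fun n : ℕ ↦ exp (-a * ((n : ℝ) + 1) ^ 2) := by
  simpa using (summable_nat_add_iff 1).mpr
    ((summable_exp_neg_mul_int_sq ha).comp_injective Nat.cast_injective)

lemma exp_neg_le_tsum_exp_neg_mul_succ_sq (ha : 0 < a) :
    exp (-a) ≤ ∑' n : ℕ, exp (-a * ((n : ℝ) + 1) ^ 2) := by
  simpa using (summable_exp_neg_mul_succ_sq ha).le_tsum 0 fun n _ ↦ (exp_pos _).le

lemma tsum_exp_neg_mul_succ_sq_le (ha : 0 < a) :
    ∑' n : ℕ, exp (-a * ((n : ℝ) + 1) ^ 2) ≤ exp (-a) / (1 - exp (-a)) := by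
  have hr : exp (-a) < 1 := exp_lt_one_iff.mpr (neg_lt_zero.mpr ha)
  have hgeom : HasSum (fun n : ℕ ↦ exp (-a) ^ (n + 1)) (exp (-a) / (1 - exp (-a))) := by
    simp_rw [pow_succ', div_eq_mul_inv]
    exact (hasSum_geometric_of_lt_one (exp_pos _).le hr).mul_left _
  refine hasSum_le (fun n ↦ ?_) (summable_exp_neg_mul_succ_sq ha).hasSum hgeom
  rw [← exp_nat_mul, exp_le_exp]
  have hn : (n : ℝ) + 1 ≤ ((n : ℝ) + 1) ^ 2 := by nlinarith [n.cast_nonneg (α := ℝ)]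
  push_cast
  nlinarith

end

lemma tendsto_exp_mul_thetaSum_sub_one :
    Tendsto (fun a ↦ exp a * (thetaSum a - 1)) atTop (𝓝 2) := by
  have hupper : Tendsto (fun a : ℝ ↦ 2 / (1 - exp (-a))) atTop (𝓝 2) := by
    simpa [Pi.div_def] using tendsto_const_nhds.div
      (tendsto_const_nhds.sub tendsto_exp_neg_atTop_nhds_zero) (by norm_num : (1 : ℝ) - 0 ≠ 0)
  refine tendsto_of_tendsto_of_tendsto_of_le_of_le' tendsto_const_nhds hupper ?_ ?_ <;>
    filter_upwards [eventually_gt_atTop 0] with a ha <;> rw [thetaSum_sub_one_eq ha]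
  · calc (2 : ℝ) = exp a * (2 * exp (-a)) := by rw [mul_left_comm, ← exp_add]; simp
      _ ≤ _ := by gcongr; exact exp_neg_le_tsum_exp_neg_mul_succ_sq ha
  · calc _ ≤ exp a * (2 * (exp (-a) / (1 - exp (-a)))) := by
          gcongr; exact tsum_exp_neg_mul_succ_sq_le ha
      _ = 2 / (1 - exp (-a)) := by
          rw [mul_div_assoc', mul_div_assoc', mul_left_comm, ← exp_add]; simp

lemma tendsto_thetaSum_atTop : Tendsto thetaSum atTop (𝓝 1) := by
  have h := (tendsto_exp_neg_atTop_nhds_zero.mul tendsto_exp_mul_thetaSum_sub_one).const_add 1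
  rw [zero_mul, add_zero] at h
  refine h.congr fun a ↦ ?_
  rw [← mul_assoc, ← exp_add, neg_add_cancel, exp_zero, one_mul, add_sub_cancel]

lemma tendsto_exp_mul_oddThetaSum : Tendsto (fun a ↦ exp a * oddThetaSum a) atTop (𝓝 2) := by
  have h4 := tendsto_exp_mul_thetaSum_sub_one.comp (tendsto_id.const_mul_atTop four_pos)
  have h3 := tendsto_exp_neg_atTop_nhds_zero.comp (tendsto_id.const_mul_atTop three_pos)
  have h := tendsto_exp_mul_thetaSum_sub_one.sub (h3.mul h4)
  rw [zero_mul, sub_zero] at h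
  refine h.congr fun a ↦ ?_
  simp only [Function.comp_apply, id, oddThetaSum]
  rw [← mul_assoc, ← exp_add, show -(3 * a) + 4 * a = a by ring]
  ring

lemma tendsto_oddThetaSum_div_sq :
    Tendsto (fun a ↦ oddThetaSum a / oddThetaSum (a / 2) ^ 2) atTop (𝓝 (1 / 2)) := by
  have h := tendsto_exp_mul_oddThetaSum
  have hq := h.div ((h.comp (tendsto_id.atTop_div_const two_pos)).pow 2) (by norm_num)
  norm_num at hq
  refine hq.congr fun a ↦ ?_
  rw [Pi.div_apply, mul_pow, ← exp_nat_mul, show ((2 : ℕ) : ℝ) * (a / 2) = a by push_cast; ring,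
    mul_div_mul_left _ _ (exp_ne_zero a)]

lemma tendsto_thetaSum_div_sq :
    Tendsto (fun a ↦ thetaSum (4 * a) / thetaSum (2 * a) ^ 2) atTop (𝓝 1) := by
  have h4 := tendsto_thetaSum_atTop.comp (tendsto_id.const_mul_atTop four_pos)
  have h2 := tendsto_thetaSum_atTop.comp (tendsto_id.const_mul_atTop two_pos)
  simpa [Function.comp_def, Pi.div_def] using h4.div (h2.pow 2) (by norm_num)

section

variable {c : ℝ}

lemma thetaSum_eq_sqrt_mul (hc : 0 < c) : thetaSum c = √(π / c) * thetaSum (π ^ 2 / c) := by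
  have h := tsum_exp_neg_mul_int_sq (div_pos hc pi_pos)
  rw [show -π * (c / π) = -c by field_simp, show -π / (c / π) = -(π ^ 2 / c) by field_simp,
    ← sqrt_eq_rpow, one_div, ← sqrt_inv, inv_div] at h
  exact h

lemma theta3_zero_exp_neg (c : ℝ) : theta3 0 (exp (-c)) = thetaSum c := by
  simp only [theta3, thetaSum, mul_zero, cos_zero, mul_one, ← exp_mul, neg_mul]

lemma hasSum_neg_one_zpow_mul {f : ℤ → ℝ} {a b : ℝ} (hf : HasSum f a)
    (heven : HasSum (fun m ↦ f (2 * m)) b) :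
    HasSum (fun n ↦ (-1 : ℝ) ^ n * f n) (2 * b - a) := by
  have hinj : Function.Injective (fun m : ℤ ↦ 2 * m) := fun m k h ↦ by simpa using h
  have hind : HasSum (Set.indicator (Set.range (fun m : ℤ ↦ 2 * m)) f) b := by
    rw [← hinj.hasSum_iff fun n hn ↦ Set.indicator_of_notMem hn f, Set.indicator_range_comp]
    exact heven
  refine ((hind.mul_left 2).sub hf).congr_fun fun n ↦ ?_
  obtain ⟨k, rfl | rfl⟩ := Int.even_or_odd' n
  · rw [Set.indicator_of_mem (Set.mem_range_self (f := fun m : ℤ ↦ 2 * m) k), zpow_mul]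
    norm_num
    ring
  · have hk : 2 * k + 1 ∉ Set.range (fun m : ℤ ↦ 2 * m) := by
      rintro ⟨m, hm⟩
      simp only at hm
      omega
    rw [Set.indicator_of_notMem hk, zpow_add₀ (by norm_num), zpow_mul]
    norm_num

lemma theta3_pi_div_two_exp_neg (hc : 0 < c) :
    theta3 (π / 2) (exp (-c)) = 2 * thetaSum (4 * c) - thetaSum c := by
  have hf : HasSum _ (thetaSum c) := (summable_exp_neg_mul_int_sq hc).hasSum
  have heven : HasSum _ (thetaSum (4 * c)) :=
    (summable_exp_neg_mul_int_sq (by positivity : 0 < 4 * c)).hasSum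
  refine ((hasSum_neg_one_zpow_mul hf ?_).congr_fun fun n ↦ ?_).tsum_eq
  · convert heven using 2 with m
    push_cast
    ring_nf
  · rw [← exp_mul, show 2 * (n : ℝ) * (π / 2) = n * π by ring, cos_int_mul_pi]
    ring_nf

lemma two_mul_thetaSum_four_mul_sub_thetaSum (hc : 0 < c) :
    2 * thetaSum (4 * c) - thetaSum c = √(π / c) * oddThetaSum (π ^ 2 / (4 * c)) := by
  rw [thetaSum_eq_sqrt_mul hc, thetaSum_eq_sqrt_mul (by positivity), oddThetaSum,
    show π / (4 * c) = (π / c) / 2 ^ 2 by ring, sqrt_div' _ (by positivity),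
    sqrt_sq zero_le_two, show 4 * (π ^ 2 / (4 * c)) = π ^ 2 / c by field_simp]
  ring

end

/-- The paper's `P̃_G(2t, σ)`. -/
noncomputable def gaussNodSymbol (t σ : ℝ) : ℝ :=
  σ * √π * theta3 t (exp (-1 / (4 * σ ^ 2))) / (theta3 t (exp (-1 / (2 * σ ^ 2)))) ^ 2

section

variable {σ : ℝ}

lemma mul_sqrt_pi_mul_div_sq (hσ : 0 < σ) (x y : ℝ) :
    σ * √π * (√(π / (1 / (4 * σ ^ 2))) * x) / (√(π / (1 / (2 * σ ^ 2))) * y) ^ 2 = x / y ^ 2 := by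
  have hnum : σ * √π * √(π / (1 / (4 * σ ^ 2))) = 2 * π * σ ^ 2 := by
    rw [mul_assoc, ← sqrt_mul pi_pos.le, show π * (π / (1 / (4 * σ ^ 2))) = (2 * π * σ) ^ 2 by
      field_simp; ring, sqrt_sq (by positivity)]
    ring
  have hden : √(π / (1 / (2 * σ ^ 2))) ^ 2 = 2 * π * σ ^ 2 := by
    rw [sq_sqrt (by positivity)]
    field_simp
  rw [← mul_assoc, hnum, mul_pow, hden, mul_div_mul_left _ _ (by positivity)]

lemma gaussNodSymbol_zero (hσ : 0 < σ) :
    gaussNodSymbol 0 σ = thetaSum (4 * (π ^ 2 * σ ^ 2)) / thetaSum (2 * (π ^ 2 * σ ^ 2)) ^ 2 := by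
  rw [gaussNodSymbol, neg_div, neg_div, theta3_zero_exp_neg, theta3_zero_exp_neg,
    thetaSum_eq_sqrt_mul (c := 1 / (4 * σ ^ 2)) (by positivity),
    thetaSum_eq_sqrt_mul (c := 1 / (2 * σ ^ 2)) (by positivity), mul_sqrt_pi_mul_div_sq hσ]
  congr 3 <;> field_simp

lemma gaussNodSymbol_pi_div_two (hσ : 0 < σ) :
    gaussNodSymbol (π / 2) σ =
      oddThetaSum (π ^ 2 * σ ^ 2) / oddThetaSum (π ^ 2 * σ ^ 2 / 2) ^ 2 := by
  rw [gaussNodSymbol, neg_div, neg_div, theta3_pi_div_two_exp_neg (by positivity),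
    theta3_pi_div_two_exp_neg (by positivity),
    two_mul_thetaSum_four_mul_sub_thetaSum (by positivity),
    two_mul_thetaSum_four_mul_sub_thetaSum (by positivity), mul_sqrt_pi_mul_div_sq hσ]
  congr 3 <;> field_simp
  norm_num

end

/-- As `σ → ∞`, `σ√π·θ₃(π/2, e^{−1/(4σ²)})/(θ₃(π/2, e^{−1/(2σ²)}))² → 1/2`
(the lower Riesz constant of the Gaussian nod system) and
`σ√π·θ₃(0, e^{−1/(4σ²)})/(θ₃(0, e^{−1/(2σ²)}))² → 1` (the upper one). -/
theorem gauss_nod_riesz_limits :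
    Tendsto (fun σ : ℝ =>
      σ * Real.sqrt π * theta3 (π / 2) (Real.exp (-1 / (4 * σ ^ 2))) /
        (theta3 (π / 2) (Real.exp (-1 / (2 * σ ^ 2)))) ^ 2)
      atTop (nhds (1 / 2)) ∧
    Tendsto (fun σ : ℝ =>
      σ * Real.sqrt π * theta3 0 (Real.exp (-1 / (4 * σ ^ 2))) /
        (theta3 0 (Real.exp (-1 / (2 * σ ^ 2)))) ^ 2)
      atTop (nhds 1) := by
  have hscale : Tendsto (fun σ : ℝ ↦ π ^ 2 * σ ^ 2) atTop atTop :=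
    (tendsto_pow_atTop two_ne_zero).const_mul_atTop (by positivity)
  constructor
  · refine (tendsto_oddThetaSum_div_sq.comp hscale).congr' ?_
    filter_upwards [eventually_gt_atTop 0] with σ hσ
    exact (gaussNodSymbol_pi_div_two hσ).symm
  · refine (tendsto_thetaSum_div_sq.comp hscale).congr' ?_
    filter_upwards [eventually_gt_atTop 0] with σ hσ
    exact (gaussNodSymbol_zero hσ).symm
end

section
/- Let σ > 0 and let Φ_L(ω, σ) = σπ ∑_{k∈ℤ} e^{−σ|ω + 2πk|}. Then (σ²π/2) · ∫_ℝ (e^{−σ|ω|}/Φ_L(ω, σ))² dω = (1 − tanh(σπ)/(2σπ)) · tanh(σπ). -/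
/-!
Unfolding: for integrable `F` and `T > 0`, `∫_ℝ F = ∫_0^T ∑ₙ F(t + nT)`. Write
`S_σ(ω) = ∑ₖ e^{-σ|ω + 2πk|}`, so that `Φ_L = σπ S_σ`. As `S_σ` is `2π`-periodic and
`(e^{-σ|ω|})² = e^{-2σ|ω|}`, the periodised integrand is `S_{2σ} / (σπ S_σ)²`. Summing two
geometric series gives `S_σ(t) = cosh(σ(t - π)) / sinh(σπ)` on `[0, 2π]`, which reduces the
integral to `∫_{-π}^{π} cosh(2σu) / cosh²(σu) du`; there `cosh 2x / cosh² x = 2 - sech² x`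
has the primitive `2x - tanh x`.
-/

open Real MeasureTheory Set

theorem integral_eq_setIntegral_Ioc_tsum_add_mul_int {E : Type*} [NormedAddCommGroup E]
    [NormedSpace ℝ E] {T : ℝ} (hT : 0 < T) {F : ℝ → E} (hF : Integrable F) :
    ∫ x, F x = ∫ t in Ioc 0 T, ∑' n : ℤ, F (t + T * n) := by
  set I : ℤ → Set ℝ := fun n => Ioc (0 + n • T) (0 + (n + 1) • T)
  have hI : ∀ n : ℤ, (· + T * n) ⁻¹' I n = Ioc 0 T := fun n => by
    ext t; simp only [I, mem_preimage, mem_Ioc, zsmul_eq_mul]; push_cast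
    constructor <;> rintro ⟨h₁, h₂⟩ <;> constructor <;> linarith
  have hshift : ∀ n : ℤ, MeasurePreserving (· + T * n) (volume.restrict (Ioc 0 T))
      (volume.restrict (I n)) := fun n =>
    hI n ▸ (measurePreserving_add_right volume (T * n)).restrict_preimage_emb
      (measurableEmbedding_addRight _) (I n)
  have hdisj : Pairwise (Function.onFun Disjoint I) := pairwise_disjoint_Ioc_add_zsmul 0 T
  have hfin : ∑' n : ℤ, ∫⁻ t in Ioc 0 T, ‖F (t + T * n)‖ₑ ≠ ⊤ := by
    simp_rw [fun n => (hshift n).lintegral_comp_emb (measurableEmbedding_addRight _)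
      (fun x => ‖F x‖ₑ)]
    rw [← lintegral_iUnion (fun n => measurableSet_Ioc) hdisj, iUnion_Ioc_add_zsmul hT,
      setLIntegral_univ]
    exact hF.2.ne
  rw [integral_tsum (fun n : ℤ => (hF.comp_add_right (T * n)).aestronglyMeasurable.restrict) hfin,
    ← setIntegral_univ, ← iUnion_Ioc_add_zsmul hT 0,
    integral_iUnion (fun n => measurableSet_Ioc) hdisj hF.integrableOn]
  exact tsum_congr fun n =>
    ((hshift n).integral_comp (measurableEmbedding_addRight _) F).symm

theorem periodic_tsum_comp_add_mul_int {α : Type*} [AddCommMonoid α] [TopologicalSpace α]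
    (f : ℝ → α) (T : ℝ) : Function.Periodic (fun x => ∑' n : ℤ, f (x + T * n)) T := fun x => by
  show ∑' n : ℤ, f (x + T + T * n) = ∑' n : ℤ, f (x + T * n)
  rw [← (Equiv.addRight (1 : ℤ)).tsum_eq (fun n : ℤ => f (x + T * n))]
  simp only [Equiv.coe_addRight, Int.cast_add, Int.cast_one, mul_add, mul_one, add_assoc,
    add_comm T]

theorem integrable_exp_neg_mul_abs {b : ℝ} (hb : 0 < b) :
    Integrable fun x : ℝ => exp (-b * |x|) := by
  rw [← integrableOn_univ, ← Iic_union_Ioi (a := 0)]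
  refine IntegrableOn.union ((integrableOn_exp_mul_Iic hb 0).congr_fun (fun x hx => ?_)
    measurableSet_Iic) ((integrableOn_exp_mul_Ioi (neg_neg_of_pos hb) 0).congr_fun
    (fun x hx => ?_) measurableSet_Ioi)
  · rw [abs_of_nonpos hx, mul_neg, neg_mul, neg_neg]
  · rw [abs_of_pos hx]

theorem hasDerivAt_two_mul_sub_sinh_div_cosh {a : ℝ} (ha : a ≠ 0) (x : ℝ) :
    HasDerivAt (fun x => 2 * x - sinh (a * x) / (a * cosh (a * x)))
      (cosh (2 * (a * x)) / cosh (a * x) ^ 2) x := by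
  have hax : HasDerivAt (fun x => a * x) a x := by simpa using (hasDerivAt_id x).const_mul a
  have hcosh := cosh_pos (a * x)
  refine (((hasDerivAt_id x).const_mul 2).sub
    (hax.sinh.div (hax.cosh.const_mul a) (by positivity))).congr_deriv ?_
  rw [cosh_two_mul]
  field_simp
  ring

theorem integral_cosh_two_mul_div_cosh_sq {a : ℝ} (ha : a ≠ 0) (c : ℝ) :
    ∫ x in -c..c, cosh (2 * (a * x)) / cosh (a * x) ^ 2 = 4 * c - 2 * tanh (a * c) / a := by
  rw [intervalIntegral.integral_eq_sub_of_hasDerivAt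
    (fun x _ => hasDerivAt_two_mul_sub_sinh_div_cosh ha x)
    ((Continuous.div (by fun_prop) (by fun_prop) fun x => by positivity).intervalIntegrable _ _)]
  simp only [mul_neg, sinh_neg, cosh_neg, tanh_eq_sinh_div_cosh]
  have := cosh_pos (a * c)
  field_simp
  ring

theorem hasSum_exp_neg_mul_abs_add_mul_int {σ T t : ℝ} (hσ : 0 < σ) (hT : 0 < T) (ht₀ : 0 ≤ t)
    (htT : t ≤ T) :
    HasSum (fun k : ℤ => exp (-σ * |t + T * k|)) (cosh (σ * (t - T / 2)) / sinh (σ * T / 2)) := by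
  set f : ℤ → ℝ := fun k => exp (-σ * |t + T * k|)
  have hgeo := hasSum_geometric_of_lt_one (exp_pos _).le
    (exp_lt_one_iff.2 (by nlinarith : -(σ * T) < 0))
  have hnat : HasSum (fun n : ℕ => f n) (exp (-(σ * t)) * (1 - exp (-(σ * T)))⁻¹) := by
    refine (hgeo.mul_left (exp (-(σ * t)))).congr_fun fun n => ?_
    simp only [f, Int.cast_natCast]
    rw [abs_of_nonneg (by positivity), ← exp_nat_mul, ← exp_add]
    ring_nf
  have hneg : HasSum (fun n : ℕ => f (-(n + 1)))
      (exp (σ * t - σ * T) * (1 - exp (-(σ * T)))⁻¹) := by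
    refine (hgeo.mul_left (exp (σ * t - σ * T))).congr_fun fun n => ?_
    have hn : (0 : ℝ) ≤ n := n.cast_nonneg
    simp only [f]
    push_cast
    rw [abs_of_nonpos (by nlinarith), ← exp_nat_mul, ← exp_add]
    ring_nf
  convert hnat.of_nat_of_neg_add_one hneg using 1
  have hv : 1 < exp (σ * T / 2) := one_lt_exp_iff.2 (by positivity)
  rw [show -(σ * t) = -(σ * (t - T / 2)) - σ * T / 2 by ring,
    show σ * t - σ * T = σ * (t - T / 2) - σ * T / 2 by ring,
    show -(σ * T) = -(σ * T / 2 + σ * T / 2) by ring]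
  simp only [cosh_eq, sinh_eq, exp_sub, exp_neg, exp_add]
  have : exp (σ * T / 2) * exp (σ * T / 2) - 1 ≠ 0 := by nlinarith
  field_simp
  ring

noncomputable def expPeriodization (σ T ω : ℝ) : ℝ := ∑' k : ℤ, exp (-σ * |ω + T * k|)

theorem expPeriodization_periodic (σ T : ℝ) : Function.Periodic (expPeriodization σ T) T :=
  periodic_tsum_comp_add_mul_int (fun x => exp (-σ * |x|)) T

theorem expPeriodization_eq_cosh_div_sinh {σ T t : ℝ} (hσ : 0 < σ) (hT : 0 < T) (ht₀ : 0 ≤ t)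
    (htT : t ≤ T) : expPeriodization σ T t = cosh (σ * (t - T / 2)) / sinh (σ * T / 2) :=
  (hasSum_exp_neg_mul_abs_add_mul_int hσ hT ht₀ htT).tsum_eq

theorem expPeriodization_eq_cosh_fract_div_sinh {σ T : ℝ} (hσ : 0 < σ) (hT : 0 < T) (ω : ℝ) :
    expPeriodization σ T ω = cosh (σ * (T * Int.fract (ω / T) - T / 2)) / sinh (σ * T / 2) := by
  have hω : ω = T * Int.fract (ω / T) + ⌊ω / T⌋ * T := by
    rw [Int.fract]; field_simp; ring
  conv_lhs => rw [hω, (expPeriodization_periodic σ T).int_mul]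
  exact expPeriodization_eq_cosh_div_sinh hσ hT (by positivity)
    (by nlinarith [Int.fract_lt_one (ω / T)])

theorem measurable_expPeriodization {σ T : ℝ} (hσ : 0 < σ) (hT : 0 < T) :
    Measurable (expPeriodization σ T) := by
  rw [funext (expPeriodization_eq_cosh_fract_div_sinh hσ hT)]
  have := measurable_fract.comp (measurable_id.div_const T)
  fun_prop

theorem inv_sinh_le_expPeriodization {σ T : ℝ} (hσ : 0 < σ) (hT : 0 < T) (ω : ℝ) :
    (sinh (σ * T / 2))⁻¹ ≤ expPeriodization σ T ω := by
  rw [expPeriodization_eq_cosh_fract_div_sinh hσ hT, div_eq_mul_inv]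
  have : 0 < sinh (σ * T / 2) := sinh_pos_iff.2 (by positivity)
  exact le_mul_of_one_le_left (by positivity) (one_le_cosh _)

theorem integrable_sq_exp_div_expPeriodization {σ T : ℝ} (hσ : 0 < σ) (hT : 0 < T) (c : ℝ) :
    Integrable fun ω => (exp (-σ * |ω|) / (c * expPeriodization σ T ω)) ^ 2 := by
  have hmeas : Measurable fun ω => (exp (-σ * |ω|) / (c * expPeriodization σ T ω)) ^ 2 :=
    ((by fun_prop : Measurable fun ω : ℝ => exp (-σ * |ω|)).div
      ((measurable_expPeriodization hσ hT).const_mul c)).pow_const 2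
  refine ((integrable_exp_neg_mul_abs (by positivity : 0 < 2 * σ)).const_mul
    (sinh (σ * T / 2) ^ 2 / c ^ 2)).mono' hmeas.aestronglyMeasurable (.of_forall fun ω => ?_)
  have hP := inv_sinh_le_expPeriodization hσ hT ω
  have hPpos : 0 < expPeriodization σ T ω :=
    (inv_pos.2 (sinh_pos_iff.2 (by positivity))).trans_le hP
  calc ‖(exp (-σ * |ω|) / (c * expPeriodization σ T ω)) ^ 2‖
      = (expPeriodization σ T ω)⁻¹ ^ 2 * (exp (-σ * |ω|) ^ 2 / c ^ 2) := by
        rw [Real.norm_of_nonneg (sq_nonneg _)]; ring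
    _ ≤ sinh (σ * T / 2) ^ 2 * (exp (-σ * |ω|) ^ 2 / c ^ 2) := by
        gcongr
        exact inv_le_of_inv_le₀ (sinh_pos_iff.2 (by positivity)) hP
    _ = sinh (σ * T / 2) ^ 2 / c ^ 2 * exp (-(2 * σ) * |ω|) := by
        rw [← exp_nat_mul]; ring_nf

theorem tsum_sq_exp_div_expPeriodization (σ T c t : ℝ) :
    ∑' n : ℤ, (exp (-σ * |t + T * n|) / (c * expPeriodization σ T (t + T * n))) ^ 2 =
      expPeriodization (2 * σ) T t / (c * expPeriodization σ T t) ^ 2 := by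
  have hper (n : ℤ) : expPeriodization σ T (t + T * n) = expPeriodization σ T t := by
    rw [mul_comm]; exact (expPeriodization_periodic σ T).int_mul n t
  simp_rw [hper, div_pow]
  rw [tsum_div_const, expPeriodization]
  congr 1
  refine tsum_congr fun n => ?_
  rw [← exp_nat_mul]
  ring_nf

theorem integral_expPeriodization_div_sq {σ T : ℝ} (hσ : 0 < σ) (hT : 0 < T) (c : ℝ) :
    ∫ t in 0..T, expPeriodization (2 * σ) T t / (c * expPeriodization σ T t) ^ 2 =
      sinh (σ * T / 2) ^ 2 / (c ^ 2 * sinh (σ * T)) * (2 * T - 2 * tanh (σ * T / 2) / σ) := by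
  have hclosed : EqOn (fun t => expPeriodization (2 * σ) T t / (c * expPeriodization σ T t) ^ 2)
      (fun t => sinh (σ * T / 2) ^ 2 / (c ^ 2 * sinh (σ * T)) *
        (cosh (2 * (σ * (t - T / 2))) / cosh (σ * (t - T / 2)) ^ 2)) (uIcc 0 T) := by
    intro t ht
    rw [uIcc_of_le hT.le] at ht
    simp only [expPeriodization_eq_cosh_div_sinh hσ hT ht.1 ht.2,
      expPeriodization_eq_cosh_div_sinh (by positivity : 0 < 2 * σ) hT ht.1 ht.2,
      mul_assoc 2 σ]
    field_simp
  rw [intervalIntegral.integral_congr hclosed, intervalIntegral.integral_const_mul,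
    intervalIntegral.integral_comp_sub_right (fun x => cosh (2 * (σ * x)) / cosh (σ * x) ^ 2),
    zero_sub, show T - T / 2 = T / 2 by ring, integral_cosh_two_mul_div_cosh_sq hσ.ne',
    mul_div_assoc σ T 2]
  ring

/-- For `σ > 0`, with `Φ_L(ω, σ) = σπ ∑_{k∈ℤ} e^{−σ|ω + 2πk|}`, one has
`(σ²π/2)·∫_ℝ (e^{−σ|ω|}/Φ_L(ω, σ))² dω = (1 − tanh(σπ)/(2σπ))·tanh(σπ)`. -/
theorem lorentz_I1 (σ : ℝ) (hσ : 0 < σ) :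
    σ ^ 2 * π / 2 *
        ∫ ω : ℝ,
          (Real.exp (-σ * |ω|) / (σ * π * ∑' k : ℤ, Real.exp (-σ * |ω + 2 * π * k|))) ^ 2 =
      (1 - Real.tanh (σ * π) / (2 * σ * π)) * Real.tanh (σ * π) := by
  have h2π : 0 < 2 * π := by positivity
  change σ ^ 2 * π / 2 * ∫ ω, (exp (-σ * |ω|) / (σ * π * expPeriodization σ (2 * π) ω)) ^ 2 = _
  rw [integral_eq_setIntegral_Ioc_tsum_add_mul_int h2π
      (integrable_sq_exp_div_expPeriodization hσ h2π (σ * π))]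
  simp_rw [tsum_sq_exp_div_expPeriodization]
  rw [← intervalIntegral.integral_of_le h2π.le, integral_expPeriodization_div_sq hσ h2π,
    show σ * (2 * π) / 2 = σ * π by ring, show σ * (2 * π) = 2 * (σ * π) by ring, sinh_two_mul,
    tanh_eq_sinh_div_cosh]
  have := sinh_pos_iff.2 (by positivity : 0 < σ * π)
  have := cosh_pos (σ * π)
  field_simp
end

section
/- Let σ > 0. Then (sinh(σπ)/π) · ∫₀^π e^{−σω}/cosh(σ(ω − π)) dω = (1 − e^{−2σπ}) · (1 + (1/(2σπ)) · ln((1 + e^{−2σπ})/2)). In particular this quantity tends to 1 as σ → ∞. -/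
/-!
Since `cosh u = e^{-u} (1 + e^{2u}) / 2`, the integrand is `2 e^{-σa} / (1 + e^{2σ(ω - a)})`, a logistic
function of `ω` with the elementary antiderivative `(e^{-σa}/σ) (2σω - log (1 + e^{2σ(ω - a)}))`.
Multiplying the resulting value by `sinh (σa) / a` gives the closed form, which visibly tends to `1`.
-/

open Real Filter Topology

lemma exp_neg_mul_div_cosh (σ a ω : ℝ) :
    exp (-σ * ω) / cosh (σ * (ω - a)) = 2 * exp (-σ * a) / (1 + exp (2 * σ * (ω - a))) := by
  have hcosh : cosh (σ * (ω - a)) = exp (-(σ * (ω - a))) * (1 + exp (2 * σ * (ω - a))) / 2 := by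
    rw [cosh_eq, mul_add, ← exp_add]
    ring_nf
  rw [hcosh]
  field_simp
  rw [← exp_add]
  ring_nf

lemma hasDerivAt_logistic_antideriv {σ : ℝ} (hσ : σ ≠ 0) (a ω : ℝ) :
    HasDerivAt (fun ω => exp (-σ * a) / σ * (2 * σ * ω - log (1 + exp (2 * σ * (ω - a)))))
      (2 * exp (-σ * a) / (1 + exp (2 * σ * (ω - a)))) ω := by
  have hlin : HasDerivAt (fun ω => 2 * σ * (ω - a)) (2 * σ) ω := by
    simpa using ((hasDerivAt_id ω).sub_const a).const_mul (2 * σ)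
  have hlog := (hlin.exp.const_add 1).log (by positivity)
  refine ((((hasDerivAt_id' ω).const_mul (2 * σ)).sub hlog).const_mul _).congr_deriv ?_
  field_simp
  ring

lemma integral_exp_neg_mul_div_cosh {σ : ℝ} (hσ : σ ≠ 0) (a : ℝ) :
    ∫ ω in (0 : ℝ)..a, exp (-σ * ω) / cosh (σ * (ω - a)) =
      exp (-σ * a) / σ * (2 * σ * a + log ((1 + exp (-2 * σ * a)) / 2)) := by
  simp only [exp_neg_mul_div_cosh]
  rw [intervalIntegral.integral_eq_sub_of_hasDerivAt
    (fun ω _ => hasDerivAt_logistic_antideriv hσ a ω)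
    (Continuous.intervalIntegrable (by fun_prop (disch := intro; positivity)) _ _),
    log_div (by positivity) two_ne_zero]
  simp only [sub_self, mul_zero, exp_zero, one_add_one_eq_two, zero_sub, mul_neg, ← neg_mul]
  ring

lemma sinh_div_mul_integral_exp_neg_mul_div_cosh {σ a : ℝ} (hσ : σ ≠ 0) (ha : a ≠ 0) :
    sinh (σ * a) / a * ∫ ω in (0 : ℝ)..a, exp (-σ * ω) / cosh (σ * (ω - a)) =
      (1 - exp (-2 * σ * a)) * (1 + 1 / (2 * σ * a) * log ((1 + exp (-2 * σ * a)) / 2)) := by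
  have hexp : exp (-2 * σ * a) = exp (-σ * a) * exp (-σ * a) := by
    rw [← exp_add]
    ring_nf
  rw [integral_exp_neg_mul_div_cosh hσ, sinh_eq, hexp, neg_mul, exp_neg]
  field_simp

lemma tendsto_one_sub_exp_neg_mul_one_add_log :
    Tendsto (fun t => (1 - exp (-t)) * (1 + 1 / t * log ((1 + exp (-t)) / 2))) atTop (𝓝 1) := by
  have hexp := tendsto_exp_neg_atTop_nhds_zero
  have hinv : Tendsto (fun t : ℝ => 1 / t) atTop (𝓝 0) := by
    simpa only [one_div] using tendsto_inv_atTop_zero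
  have hlog := ((hexp.const_add 1).div_const 2).log (by norm_num)
  simpa using (tendsto_const_nhds (x := (1 : ℝ)).sub hexp).mul
    (tendsto_const_nhds (x := (1 : ℝ)).add (hinv.mul hlog))

/-- For `σ > 0`,
`(sinh(σπ)/π)·∫₀^π e^{−σω}/cosh(σ(ω − π)) dω
  = (1 − e^{−2σπ})·(1 + (1/(2σπ))·ln((1 + e^{−2σπ})/2))`,
and this quantity tends to `1` as `σ → ∞`. -/
theorem lorentz_I2 (σ : ℝ) (hσ : 0 < σ) :
    (Real.sinh (σ * π) / π *
        ∫ ω in (0 : ℝ)..π, Real.exp (-σ * ω) / Real.cosh (σ * (ω - π))) =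
      (1 - Real.exp (-2 * σ * π)) *
        (1 + 1 / (2 * σ * π) * Real.log ((1 + Real.exp (-2 * σ * π)) / 2)) ∧
    Tendsto (fun s : ℝ => Real.sinh (s * π) / π *
        ∫ ω in (0 : ℝ)..π, Real.exp (-s * ω) / Real.cosh (s * (ω - π)))
      atTop (nhds 1) := by
  refine ⟨sinh_div_mul_integral_exp_neg_mul_div_cosh hσ.ne' pi_ne_zero, ?_⟩
  have hscale : Tendsto (fun s : ℝ => 2 * s * π) atTop atTop :=
    tendsto_id.const_mul_atTop two_pos |>.atTop_mul_const pi_pos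
  refine (tendsto_one_sub_exp_neg_mul_one_add_log.comp hscale).congr' ?_
  filter_upwards [eventually_gt_atTop 0] with s hs
  rw [sinh_div_mul_integral_exp_neg_mul_div_cosh hs.ne' pi_ne_zero]
  simp only [Function.comp_apply, neg_mul]
end
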